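/- For every real ε > 0 there exists N such that for every integer n ≥ N and every integer ℓ with 1 ≤ ℓ ≤ n - 1, one has Σ_{k=1}^{n-1} Fix(n,ℓ,k) ≤ ε · C(n,ℓ) (as real numbers). That is, the total number of configurations in S(n,ℓ) fixed by some fixed nontrivial rotation, summed over all nontrivial rotations, is asymptotically negligible compared with C(n,ℓ), uniformly in ℓ. -/

import Mathlib

/-!
A configuration fixed by the rotation by `k ≠ 0` is constant on the cosets of the subgroup `H`
generated by `k`, so it is a configuration on `ZMod n ⧸ H` with `ℓ / |H|` entries `true`. Hence
`Fix(n,ℓ,k)` vanishes unless `|H| ∣ ℓ` (in particular unless `n ∣ ℓ k`), and otherwise equals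
`C(n/|H|, ℓ/|H|)`, whose square is at most `C(n,ℓ)` by Vandermonde's identity. Fewer than
`m = min ℓ (n - ℓ)` rotations `k` satisfy `n ∣ ℓ k`, so the sum is at most `m √C(n,ℓ)`, and
`C(n,ℓ) = C(n,m) ≥ max n 2^m` makes `m²` negligible against `C(n,ℓ)`.
-/

/-- Rotation of a configuration `v : ZMod n → Bool` by `k`: `(k • v) i = v (i - k)`. -/
def rot (n : ℕ) (k : ZMod n) (v : ZMod n → Bool) : ZMod n → Bool :=
  fun i => v (i - k)

/-- The set of configurations with exactly `ℓ` entries equal to `true`. -/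
def Sconf (n ℓ : ℕ) [NeZero n] : Finset (ZMod n → Bool) :=
  Finset.univ.filter fun v => (Finset.univ.filter fun i => v i = true).card = ℓ

/-- The rotation orbit of a configuration. -/
def orbitOf (n : ℕ) [NeZero n] (v : ZMod n → Bool) : Finset (ZMod n → Bool) :=
  Finset.univ.image fun k : ZMod n => rot n k v

/-- The number of rotation orbits on `Sconf n ℓ`. -/
def Orb (n ℓ : ℕ) [NeZero n] : ℕ := ((Sconf n ℓ).image (orbitOf n)).card

/-- The number of configurations in `Sconf n ℓ` fixed by rotation by `k`. -/
def FixCount (n ℓ : ℕ) [NeZero n] (k : ZMod n) : ℕ :=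
  ((Sconf n ℓ).filter fun v => rot n k v = v).card

open Finset

namespace Nat

theorem choose_mul_choose_le_choose_add (a b c d : ℕ) :
    a.choose b * c.choose d ≤ (a + c).choose (b + d) := by
  rw [add_choose_eq]
  exact single_le_sum (f := fun ij => a.choose ij.1 * c.choose ij.2) (a := (b, d))
    (fun _ _ => Nat.zero_le _) (mem_antidiagonal.mpr rfl)

theorem choose_pow_le_choose_mul (a j h : ℕ) : a.choose j ^ h ≤ (h * a).choose (h * j) := by
  induction h with
  | zero => simp
  | succ h ih =>
    calc a.choose j ^ (h + 1) = a.choose j ^ h * a.choose j := pow_succ _ _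
      _ ≤ (h * a).choose (h * j) * a.choose j := Nat.mul_le_mul_right _ ih
      _ ≤ ((h + 1) * a).choose ((h + 1) * j) := by
        simpa only [add_one_mul] using choose_mul_choose_le_choose_add _ _ _ _

theorem two_pow_le_choose {n m : ℕ} (h : 2 * m ≤ n) : 2 ^ m ≤ n.choose m :=
  calc 2 ^ m = (choose 2 1) ^ m := by rw [choose_one_right]
    _ ≤ (m * 2).choose (m * 1) := choose_pow_le_choose_mul 2 1 m
    _ ≤ n.choose m := by rw [mul_one, mul_comm]; exact choose_le_choose m h

theorem self_le_choose {n m : ℕ} (h1 : 1 ≤ m) (h2 : 2 * m ≤ n) : n ≤ n.choose m := by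
  induction m, h1 using Nat.le_induction with
  | base => rw [choose_one_right]
  | succ m _ ih => exact (ih (by omega)).trans (choose_le_succ_of_lt_half_left (by omega))

theorem card_filter_dvd_mul_lt {n a : ℕ} (ha : 0 < a) :
    #{k ∈ Icc 1 (n - 1) | n ∣ a * k} < a := by
  set s : Finset ℕ := {k ∈ Icc 1 (n - 1) | n ∣ a * k} with hs
  have hmaps : Set.MapsTo (fun k => a * k / n) s (Icc 1 (a - 1)) := by
    intro k hk
    rw [mem_coe, hs, mem_filter, mem_Icc] at hk
    obtain ⟨⟨hk1, hkn⟩, j, hj⟩ := hk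
    have hn : 0 < n := by omega
    have hj0 : n * 0 < n * j := by rw [← hj]; positivity
    have hja : n * j < n * a := by
      rw [← hj, mul_comm n]
      exact Nat.mul_lt_mul_of_pos_left (by omega) ha
    have := Nat.lt_of_mul_lt_mul_left hj0
    have := Nat.lt_of_mul_lt_mul_left hja
    simp only [mem_coe, mem_Icc, hj, Nat.mul_div_cancel_left _ hn]
    omega
  have hinj : Set.InjOn (fun k => a * k / n) s := by
    intro k hk k' hk' hkk'
    rw [mem_coe, hs, mem_filter] at hk hk'
    have := congrArg (· * n) hkk'
    simp only [Nat.div_mul_cancel hk.2, Nat.div_mul_cancel hk'.2] at this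
    exact Nat.eq_of_mul_eq_mul_left ha this
  calc #s ≤ #(Icc 1 (a - 1)) := card_le_card_of_injOn _ hmaps hinj
    _ < a := by rw [card_Icc]; omega

end Nat

def trueCount {α : Type*} [Fintype α] (v : α → Bool) : ℕ := #{i | v i = true}

theorem card_trueCount_eq {α : Type*} [Fintype α] [DecidableEq α] (j : ℕ) :
    #{v : α → Bool | trueCount v = j} = (Fintype.card α).choose j := by
  rw [← card_univ, ← card_powersetCard]
  refine card_bij' (fun v _ => ({i | v i = true} : Finset α)) (fun s _ i => decide (i ∈ s))
    (fun v hv => ?_) (fun s hs => ?_) (fun v _ => ?_) (fun s _ => ?_)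
  · rw [mem_filter] at hv
    simpa [trueCount] using hv.2
  · rw [mem_powersetCard] at hs
    rw [mem_filter]
    simp [trueCount, hs.2]
  · funext i
    simp
  · ext i
    simp

section Invariant

variable {G : Type*} [AddGroup G]

open AddSubgroup QuotientAddGroup

theorem trueCount_comp_mk [Fintype G] {H : AddSubgroup G} [Fintype (G ⧸ H)] (g : G ⧸ H → Bool) :
    trueCount (g ∘ (mk : G → G ⧸ H)) = Nat.card H * trueCount g := by
  classical
  have := Nat.card_congr (preimageMkEquivAddSubgroupProdSet H {q | g q = true})
  rw [Nat.card_prod] at this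
  simpa [trueCount, Nat.card_eq_fintype_card, Fintype.card_subtype] using this

theorem apply_add_zsmul_of_invariant {k : G} {v : G → Bool} (hv : ∀ i, v (i - k) = v i)
    (i : G) (m : ℤ) : v (i + m • k) = v i := by
  induction m using Int.induction_on with
  | zero => simp
  | succ m ih => rw [add_zsmul, one_zsmul, ← add_assoc, ← hv, add_sub_cancel_right, ih]
  | pred m ih => rw [sub_zsmul, one_zsmul, ← add_assoc, ← sub_eq_add_neg, hv, ih]

theorem exists_comp_mk_eq_iff {k : G} {v : G → Bool} :
    (∃ g : G ⧸ zmultiples k → Bool, g ∘ mk = v) ↔ ∀ i, v (i - k) = v i := by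
  constructor
  · rintro ⟨g, rfl⟩ i
    simp [sub_eq_add_neg]
  · intro hv
    refine ⟨Quotient.lift v fun i j hij => ?_, rfl⟩
    obtain ⟨m, hm⟩ := mem_zmultiples_iff.mp (leftRel_apply.mp hij)
    rw [← apply_add_zsmul_of_invariant hv i m, hm, add_neg_cancel_left]

theorem addOrderOf_dvd_trueCount_of_invariant [Fintype G] {k : G} {v : G → Bool}
    (hv : ∀ i, v (i - k) = v i) : addOrderOf k ∣ trueCount v := by
  classical
  obtain ⟨g, rfl⟩ := exists_comp_mk_eq_iff.mpr hv
  rw [trueCount_comp_mk, Nat.card_zmultiples]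
  exact dvd_mul_right _ _

theorem card_invariant_eq [Fintype G] [DecidableEq G] (k : G) [Fintype (G ⧸ zmultiples k)]
    [DecidableEq (G ⧸ zmultiples k)] (ℓ : ℕ) :
    #{v : G → Bool | trueCount v = ℓ ∧ ∀ i, v (i - k) = v i} =
      #{g : G ⧸ zmultiples k → Bool | addOrderOf k * trueCount g = ℓ} := by
  rw [← card_image_of_injective _ mk_surjective.injective_comp_right]
  congr 1
  ext v
  simp only [mem_image, mem_filter, mem_univ, true_and, ← exists_comp_mk_eq_iff]
  constructor
  · rintro ⟨hv, g, rfl⟩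
    exact ⟨g, by rwa [trueCount_comp_mk, Nat.card_zmultiples] at hv, rfl⟩
  · rintro ⟨g, hg, rfl⟩
    exact ⟨by rw [trueCount_comp_mk, Nat.card_zmultiples, hg], g, rfl⟩

theorem card_invariant_sq_le [Fintype G] [DecidableEq G] {k : G} (hk : k ≠ 0) (ℓ : ℕ) :
    #{v : G → Bool | trueCount v = ℓ ∧ ∀ i, v (i - k) = v i} ^ 2 ≤
      (Fintype.card G).choose ℓ := by
  classical
  rw [card_invariant_eq]
  have horder : 2 ≤ addOrderOf k := by
    have := (addOrderOf_pos k).ne'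
    have := (AddMonoid.addOrderOf_eq_one_iff (x := k)).not.mpr hk
    omega
  have hcard : Fintype.card G = addOrderOf k * Fintype.card (G ⧸ zmultiples k) := by
    have := card_eq_card_quotient_mul_card_addSubgroup (zmultiples k)
    rw [Nat.card_zmultiples] at this
    simp only [Nat.card_eq_fintype_card] at this
    rw [this, mul_comm]
  by_cases hdvd : addOrderOf k ∣ ℓ
  · obtain ⟨j, rfl⟩ := hdvd
    simp only [Nat.mul_left_cancel_iff (addOrderOf_pos k), card_trueCount_eq, hcard]
    set c := (Fintype.card (G ⧸ zmultiples k)).choose j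
    rcases Nat.eq_zero_or_pos c with hc | hc
    · simp [hc]
    · exact (Nat.pow_le_pow_right hc horder).trans (Nat.choose_pow_le_choose_mul _ _ _)
  · rw [filter_false_of_mem fun g _ hg => hdvd ⟨_, hg.symm⟩]
    simp

end Invariant

section Rotation

variable {n : ℕ} [NeZero n]

theorem fixCount_eq_card_invariant (ℓ : ℕ) (k : ZMod n) :
    FixCount n ℓ k = #{v : ZMod n → Bool | trueCount v = ℓ ∧ ∀ i, v (i - k) = v i} := by
  simp only [FixCount, Sconf, filter_filter, rot, funext_iff]
  rfl

theorem fixCount_sq_le {k : ZMod n} (hk : k ≠ 0) (ℓ : ℕ) : FixCount n ℓ k ^ 2 ≤ n.choose ℓ := by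
  simpa [fixCount_eq_card_invariant, ZMod.card] using card_invariant_sq_le hk ℓ

theorem dvd_mul_of_fixCount_ne_zero {ℓ k : ℕ} (h : FixCount n ℓ k ≠ 0) : n ∣ ℓ * k := by
  rw [fixCount_eq_card_invariant] at h
  obtain ⟨v, hv⟩ := card_ne_zero.mp h
  rw [mem_filter] at hv
  have := addOrderOf_dvd_trueCount_of_invariant hv.2.2
  rw [hv.2.1, addOrderOf_dvd_iff_nsmul_eq_zero, nsmul_eq_mul] at this
  exact (ZMod.natCast_eq_zero_iff _ _).mp (by exact_mod_cast this)

theorem sum_fixCount_le {ℓ : ℕ} (h1 : 1 ≤ ℓ) (h2 : ℓ ≤ n - 1) :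
    ∑ k ∈ Icc 1 (n - 1), (FixCount n ℓ k : ℝ) ≤ (min ℓ (n - ℓ) : ℕ) * √(n.choose ℓ) := by
  rw [← sum_filter_of_ne (p := fun k => n ∣ ℓ * k)
    fun k _ hk => dvd_mul_of_fixCount_ne_zero (by exact_mod_cast hk)]
  have hterm : ∀ k ∈ Icc 1 (n - 1), (FixCount n ℓ k : ℝ) ≤ √(n.choose ℓ) := by
    intro k hk
    rw [mem_Icc] at hk
    have hk0 : (k : ZMod n) ≠ 0 := by
      rw [Ne, ZMod.natCast_eq_zero_iff]
      exact fun hdvd => by have := Nat.le_of_dvd (by omega) hdvd; omega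
    rw [Real.le_sqrt (by positivity) (by positivity)]
    exact_mod_cast fixCount_sq_le hk0 ℓ
  have hcard : #{k ∈ Icc 1 (n - 1) | n ∣ ℓ * k} ≤ min ℓ (n - ℓ) := by
    refine le_min (Nat.card_filter_dvd_mul_lt (by omega)).le
      ((card_le_card fun k hk => ?_).trans (Nat.card_filter_dvd_mul_lt (n := n) (by omega)).le)
    rw [mem_filter] at hk ⊢
    refine ⟨hk.1, ?_⟩
    rw [Nat.sub_mul]
    exact Nat.dvd_sub (dvd_mul_right n k) hk.2
  calc ∑ k ∈ Icc 1 (n - 1) with n ∣ ℓ * k, (FixCount n ℓ k : ℝ)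
      ≤ #{k ∈ Icc 1 (n - 1) | n ∣ ℓ * k} • √(n.choose ℓ) :=
        sum_le_card_nsmul _ _ _ fun k hk => hterm k (mem_filter.mp hk).1
    _ ≤ (min ℓ (n - ℓ) : ℕ) * √(n.choose ℓ) := by
        rw [nsmul_eq_mul]
        gcongr

end Rotation

theorem exists_sq_le_mul_choose {δ : ℝ} (hδ : 0 < δ) :
    ∃ N : ℕ, ∀ n m : ℕ, N ≤ n → 1 ≤ m → 2 * m ≤ n → (m : ℝ) ^ 2 ≤ δ * n.choose m := by
  obtain ⟨M, hM⟩ := Filter.eventually_atTop.mp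
    ((tendsto_pow_const_div_const_pow_of_one_lt 2 one_lt_two).eventually_lt_const hδ)
  refine ⟨⌈(M : ℝ) ^ 2 / δ⌉₊, fun n m hn hm1 hm2 => ?_⟩
  rcases le_total M m with hMm | hmM
  · calc (m : ℝ) ^ 2 ≤ δ * 2 ^ m := by
          have := hM m hMm
          rw [div_lt_iff₀ (by positivity)] at this
          linarith
      _ ≤ δ * n.choose m := by
          gcongr
          exact_mod_cast Nat.two_pow_le_choose hm2
  · calc (m : ℝ) ^ 2 ≤ (M : ℝ) ^ 2 := by gcongr
      _ ≤ δ * n := by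
          have := Nat.ceil_le.mp hn
          rw [div_le_iff₀ hδ] at this
          linarith
      _ ≤ δ * n.choose m := by
          gcongr
          exact_mod_cast Nat.self_le_choose hm1 hm2

/-- The total number of configurations fixed by nontrivial rotations is asymptotically
negligible compared with `C(n,ℓ)`, uniformly in `1 ≤ ℓ ≤ n - 1` (Eq. (31) of the paper). -/
theorem stmt_6 :
    ∀ ε : ℝ, 0 < ε → ∃ N : ℕ, ∀ (n ℓ : ℕ), N ≤ n → ∀ (h1 : 1 ≤ ℓ) (h2 : ℓ ≤ n - 1),
      haveI : NeZero n := ⟨by omega⟩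
      ∑ k ∈ Finset.Icc 1 (n - 1), ((FixCount n ℓ (k : ZMod n) : ℕ) : ℝ)
        ≤ ε * ((n.choose ℓ : ℕ) : ℝ) := by
  intro ε hε
  obtain ⟨N, hN⟩ := exists_sq_le_mul_choose (pow_pos hε 2)
  refine ⟨N, fun n ℓ hn h1 h2 => ?_⟩
  have : NeZero n := ⟨by omega⟩
  have hmin : ((min ℓ (n - ℓ) : ℕ) : ℝ) ≤ ε * √(n.choose ℓ) := by
    have hchoose : n.choose (min ℓ (n - ℓ)) = n.choose ℓ := by
      rcases le_total ℓ (n - ℓ) with h | h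
      · rw [min_eq_left h]
      · rw [min_eq_right h, Nat.choose_symm (by omega)]
    have := hN n (min ℓ (n - ℓ)) hn (by omega) (by omega)
    rw [hchoose] at this
    rw [← pow_le_pow_iff_left₀ (by positivity) (by positivity) two_ne_zero, mul_pow,
      Real.sq_sqrt (by positivity)]
    exact this
  calc ∑ k ∈ Icc 1 (n - 1), (FixCount n ℓ k : ℝ)
      ≤ (min ℓ (n - ℓ) : ℕ) * √(n.choose ℓ) := sum_fixCount_le h1 h2
    _ ≤ ε * √(n.choose ℓ) * √(n.choose ℓ) := by gcongr
    _ = ε * n.choose ℓ := by rw [mul_assoc, Real.mul_self_sqrt (by positivity)]
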